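/- arXiv:2009.10700 — 6 statements merged into one kernel-verified Lean document; each statement's English description precedes it below -/
import Mathlib

section
/- Let a > 0 and b ∈ (0,1) be real constants, and let V : [0,∞) → ℝ be differentiable with V(t) ≥ 0 for all t ≥ 0 and V'(t) ≤ −a·V(t)^b for all t ≥ 0. Then V(t) = 0 for every t ≥ V(0)^{1−b} / (a(1−b)). In particular V reaches zero in finite time with settling time at most V(0)^{1−b}/(a(1−b)). -/
theorem finite_time_stability_comparison
    (a b : ℝ) (ha : 0 < a) (hb0 : 0 < b) (hb1 : b < 1)
    (V V' : ℝ → ℝ)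
    (hVnonneg : ∀ t ≥ (0 : ℝ), 0 ≤ V t)
    (hVderiv : ∀ t ≥ (0 : ℝ), HasDerivAt V (V' t) t)
    (hVineq : ∀ t ≥ (0 : ℝ), V' t ≤ -a * (V t) ^ b) :
    ∀ t : ℝ, (V 0) ^ (1 - b) / (a * (1 - b)) ≤ t → V t = 0 := by
  have hb1' : 0 < 1 - b := by linarith
  have hden : 0 < a * (1 - b) := mul_pos ha hb1'
  -- V is antitone on [0, ∞)
  have hVanti : AntitoneOn V (Set.Ici 0) := by
    apply antitoneOn_of_deriv_nonpos (convex_Ici 0)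
    · intro x hx
      exact (hVderiv x hx).continuousAt.continuousWithinAt
    · intro x hx
      rw [interior_Ici] at hx
      exact (hVderiv x (le_of_lt hx)).differentiableAt.differentiableWithinAt
    · intro x hx
      rw [interior_Ici] at hx
      rw [(hVderiv x (le_of_lt hx)).deriv]
      have h1 := hVineq x (le_of_lt hx)
      have h2 : 0 ≤ (V x) ^ b := Real.rpow_nonneg (hVnonneg x (le_of_lt hx)) b
      nlinarith
  intro t ht
  have hT0 : (0:ℝ) ≤ (V 0) ^ (1 - b) / (a * (1 - b)) :=
    div_nonneg (Real.rpow_nonneg (hVnonneg 0 le_rfl) _) hden.le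
  have ht0 : 0 ≤ t := le_trans hT0 ht
  by_contra h
  have hVt : 0 < V t := lt_of_le_of_ne (hVnonneg t ht0) (Ne.symm h)
  have hpos : ∀ s ∈ Set.Icc (0:ℝ) t, 0 < V s := fun s hs =>
    lt_of_lt_of_le hVt (hVanti hs.1 ht0 hs.2)
  set g : ℝ → ℝ := fun s => V s ^ (1 - b) + a * (1 - b) * s with hg
  have hgderiv : ∀ s ∈ Set.Icc (0:ℝ) t,
      HasDerivAt g (V' s * (1 - b) * V s ^ (1 - b - 1) + a * (1 - b)) s := by
    intro s hs
    have h1 := (hVderiv s hs.1).rpow_const (p := 1 - b) (Or.inl (ne_of_gt (hpos s hs)))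
    have h2 : HasDerivAt (fun s : ℝ => a * (1 - b) * s) (a * (1 - b)) s := by
      simpa using (hasDerivAt_id s).const_mul (a * (1 - b))
    exact h1.add h2
  have hganti : AntitoneOn g (Set.Icc 0 t) := by
    apply antitoneOn_of_deriv_nonpos (convex_Icc 0 t)
    · intro x hx
      exact (hgderiv x hx).continuousAt.continuousWithinAt
    · intro x hx
      rw [interior_Icc] at hx
      exact (hgderiv x ⟨hx.1.le, hx.2.le⟩).differentiableAt.differentiableWithinAt
    · intro x hx
      rw [interior_Icc] at hx
      have hxI : x ∈ Set.Icc (0:ℝ) t := ⟨hx.1.le, hx.2.le⟩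
      rw [(hgderiv x hxI).deriv]
      have hVx : 0 < V x := hpos x hxI
      have h1 := hVineq x hx.1.le
      have h2 : (0:ℝ) ≤ V x ^ (1 - b - 1) := Real.rpow_nonneg hVx.le _
      have h3 : V x ^ b * V x ^ (1 - b - 1) = V x ^ (b + (1 - b - 1)) :=
        (Real.rpow_add hVx b (1 - b - 1)).symm
      have h4 : b + (1 - b - 1) = 0 := by ring
      rw [h4, Real.rpow_zero] at h3
      -- V' x * (1-b) * V x^(1-b-1) ≤ -a * V x^b * (1-b) * V x^(1-b-1) = -a*(1-b)
      have h5 : V' x * (V x ^ (1 - b - 1)) ≤ (-a * V x ^ b) * (V x ^ (1 - b - 1)) :=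
        mul_le_mul_of_nonneg_right h1 h2
      nlinarith
  have hmem0 : (0:ℝ) ∈ Set.Icc (0:ℝ) t := ⟨le_rfl, ht0⟩
  have hmemt : t ∈ Set.Icc (0:ℝ) t := ⟨ht0, le_rfl⟩
  have hgt : g t ≤ g 0 := hganti hmem0 hmemt ht0
  simp only [hg, mul_zero, add_zero] at hgt
  have hlin : (V 0) ^ (1 - b) ≤ t * (a * (1 - b)) := (div_le_iff₀ hden).mp ht
  have hVtpow : 0 < V t ^ (1 - b) := Real.rpow_pos_of_pos hVt _
  nlinarith
end

section
/- (Barbalat's Lemma) Let f : [0,∞) → ℝ be uniformly continuous. If the limit lim_{t→∞} ∫₀^t f(ω) dω exists and is finite, then lim_{t→∞} f(t) = 0. -/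
open Filter

theorem barbalat_lemma
    (f : ℝ → ℝ)
    (hf : UniformContinuousOn f (Set.Ici 0))
    (hlim : ∃ L : ℝ, Tendsto (fun t => ∫ ω in (0:ℝ)..t, f ω) atTop (nhds L)) :
    Tendsto f atTop (nhds 0) := by
  obtain ⟨L, hL⟩ := hlim
  have hcont : ContinuousOn f (Set.Ici 0) := hf.continuousOn
  by_contra hcon
  rw [Metric.tendsto_atTop] at hcon
  push_neg at hcon
  obtain ⟨ε, hε, hfreq⟩ := hcon
  rw [Metric.uniformContinuousOn_iff] at hf
  obtain ⟨δ, hδ, hδf⟩ := hf (ε/2) (by linarith)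
  set d : ℝ := δ/2 with hd
  have hdpos : 0 < d := by positivity
  have hdlt : d < δ := by simp [hd]; linarith
  -- integrability
  have hint : ∀ a b : ℝ, 0 ≤ a → 0 ≤ b → IntervalIntegrable f MeasureTheory.volume a b := by
    intro a b ha hb
    apply (hcont.mono ?_).intervalIntegrable
    intro x hx
    rcases Set.mem_uIcc.mp hx with ⟨h1, _⟩ | ⟨h1, _⟩
    · exact le_trans ha h1
    · exact le_trans hb h1
  -- differences of F tend to 0
  have h1 : Tendsto (fun t => (∫ ω in (0:ℝ)..(t + d), f ω) - ∫ ω in (0:ℝ)..t, f ω)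
      atTop (nhds 0) := by
    have := (hL.comp (tendsto_atTop_add_const_right atTop d tendsto_id)).sub hL
    simpa using this
  rw [Metric.tendsto_atTop] at h1
  obtain ⟨N, hN⟩ := h1 (ε * d / 2) (by positivity)
  obtain ⟨t, ht, htf⟩ := hfreq (max N 0)
  have htN : N ≤ t := le_trans (le_max_left _ _) ht
  have ht0 : (0:ℝ) ≤ t := le_trans (le_max_right _ _) ht
  have hsmall := hN t htN
  rw [Real.dist_eq, sub_zero] at hsmall
  rw [Real.dist_eq, sub_zero] at htf
  have heq : (∫ ω in (0:ℝ)..(t + d), f ω) - (∫ ω in (0:ℝ)..t, f ω)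
      = ∫ ω in t..(t + d), f ω :=
    intervalIntegral.integral_interval_sub_left (hint 0 (t + d) le_rfl (by linarith))
      (hint 0 t le_rfl ht0)
  rw [heq] at hsmall
  have habs := abs_lt.mp hsmall
  -- pointwise estimate
  have hclose : ∀ s ∈ Set.Icc t (t + d), |f s - f t| < ε / 2 := by
    intro s hs
    have hs0 : (0:ℝ) ≤ s := le_trans ht0 hs.1
    have : dist s t < δ := by
      rw [Real.dist_eq, abs_of_nonneg (by linarith [hs.1])]
      linarith [hs.2]
    have := hδf s hs0 t ht0 this
    rwa [Real.dist_eq] at this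
  rcases le_abs.mp htf with hpos | hneg
  · -- f t ≥ ε, so f ≥ ε/2 on the interval
    have hmono : (∫ _ω in t..(t + d), (ε/2 : ℝ)) ≤ ∫ ω in t..(t + d), f ω := by
      apply intervalIntegral.integral_mono_on (by linarith) intervalIntegrable_const
        (hint t (t + d) ht0 (by linarith))
      intro s hs
      have := hclose s hs
      have := abs_lt.mp this
      linarith [this.1]
    rw [intervalIntegral.integral_const, smul_eq_mul] at hmono
    have : (t + d - t) * (ε / 2) = ε * d / 2 := by ring
    rw [this] at hmono
    linarith [habs.2]
  · -- f t ≤ -ε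
    have hneg' : f t ≤ -ε := by linarith
    have hmono : (∫ ω in t..(t + d), f ω) ≤ ∫ _ω in t..(t + d), (-(ε/2) : ℝ) := by
      apply intervalIntegral.integral_mono_on (by linarith)
        (hint t (t + d) ht0 (by linarith)) intervalIntegrable_const
      intro s hs
      have := abs_lt.mp (hclose s hs)
      linarith [this.2]
    rw [intervalIntegral.integral_const, smul_eq_mul] at hmono
    have : (t + d - t) * (-(ε / 2)) = -(ε * d / 2) := by ring
    rw [this] at hmono
    linarith [habs.1]
end

section
/- Let N : ℝ → ℝ be the Nussbaum function N(s) = exp(s²)·cos((π/2)s) + 1. Then limsup_{k→∞} (1/k) ∫₀^k N(s) ds = +∞, i.e., for every real M there exist arbitrarily large k > 0 with (1/k) ∫₀^k N(s) ds > M. -/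
open Real intervalIntegral

noncomputable def g (s : ℝ) : ℝ := Real.exp (s ^ 2) * Real.cos ((π / 2) * s)

lemma g_cont : Continuous g := by
  unfold g; continuity

lemma g_intble (a b : ℝ) : IntervalIntegrable g MeasureTheory.volume a b :=
  g_cont.intervalIntegrable a b

lemma exp_mul_integral (a : ℝ) (ha : 0 < a) :
    ∫ s in (0:ℝ)..a, Real.exp (a * s) = (Real.exp (a * a) - 1) / a := by
  have h : ∀ x ∈ Set.uIcc (0:ℝ) a, HasDerivAt (fun x => Real.exp (a * x) / a)
      (Real.exp (a * x)) x := by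
    intro x _
    have h1 : HasDerivAt (fun x => a * x) a x := by
      simpa using (hasDerivAt_id x).const_mul a
    have h2 := (Real.hasDerivAt_exp (a * x)).comp x h1
    have := h2.div_const a
    simpa [mul_div_assoc, mul_div_cancel_right₀ _ ha.ne'] using this
  have hint : IntervalIntegrable (fun x => Real.exp (a * x)) MeasureTheory.volume 0 a :=
    (Real.continuous_exp.comp (continuous_const.mul continuous_id)).intervalIntegrable 0 a
  rw [integral_eq_sub_of_hasDerivAt h hint]
  simp [sub_div]

-- lower bound for the integral over [0,a]
lemma neg_part (a : ℝ) (ha : 1 ≤ a) :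
    -(Real.exp (a ^ 2) / a) ≤ ∫ s in (0:ℝ)..a, g s := by
  have ha0 : 0 < a := lt_of_lt_of_le one_pos ha
  have hmono : ∫ s in (0:ℝ)..a, -Real.exp (a * s) ≤ ∫ s in (0:ℝ)..a, g s := by
    apply integral_mono_on (le_of_lt ha0)
    · exact ((Real.continuous_exp.comp (continuous_const.mul continuous_id)).neg).intervalIntegrable 0 a
    · exact g_intble 0 a
    · intro s hs
      obtain ⟨hs0, hsa⟩ := hs
      have h1 : Real.exp (s ^ 2) ≤ Real.exp (a * s) := by
        apply Real.exp_le_exp.mpr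
        nlinarith
      have h2 : -1 ≤ Real.cos ((π / 2) * s) := Real.neg_one_le_cos _
      have h3 : 0 < Real.exp (s ^ 2) := Real.exp_pos _
      unfold g
      nlinarith
  calc -(Real.exp (a ^ 2) / a) ≤ ∫ s in (0:ℝ)..a, -Real.exp (a * s) := by
        rw [integral_neg, exp_mul_integral a ha0]
        rw [show a * a = a ^ 2 from (sq a).symm]
        have h : (Real.exp (a ^ 2) - 1) / a ≤ Real.exp (a ^ 2) / a := by gcongr; linarith
        linarith
      _ ≤ _ := hmono

lemma cos_shift (n : ℕ) (s : ℝ) :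
    Real.cos ((π / 2) * s) = Real.cos ((π / 2) * (s - 4 * n)) := by
  have : (π / 2) * s = (π / 2) * (s - 4 * n) + (n : ℤ) * (2 * π) := by
    push_cast; ring
  rw [this, Real.cos_add_int_mul_two_pi]

lemma cos_nn (n : ℕ) (s : ℝ) (h1 : 4 * n - 1 ≤ s) (h2 : s ≤ 4 * n + 1) :
    0 ≤ Real.cos ((π / 2) * s) := by
  rw [cos_shift n s]
  apply Real.cos_nonneg_of_mem_Icc
  have hπ : 0 < π := Real.pi_pos
  constructor
  · nlinarith
  · nlinarith

lemma cos_half (n : ℕ) (s : ℝ) (h1 : 4 * n - 1/2 ≤ s) (h2 : s ≤ 4 * n + 1/2) :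
    1/2 ≤ Real.cos ((π / 2) * s) := by
  rw [cos_shift n s]
  have hb := Real.one_sub_sq_div_two_le_cos (x := (π / 2) * (s - 4 * n))
  have hπ : 0 < π := Real.pi_pos
  have hπ4 : π ≤ 4 := by
    have := Real.pi_lt_d2; linarith
  have ht : (s - 4 * (n:ℝ)) ^ 2 ≤ 1/4 := by nlinarith
  have hp : (π / 2) ^ 2 ≤ 4 := by nlinarith
  have hsq : ((π / 2) * (s - 4 * n)) ^ 2 ≤ 1 := by
    rw [mul_pow]
    nlinarith [sq_nonneg (s - 4 * (n:ℝ)), sq_nonneg (π/2)]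
  linarith

lemma g_nonneg_on (n : ℕ) (s : ℝ) (h1 : 4 * n - 1 ≤ s) (h2 : s ≤ 4 * n + 1) :
    0 ≤ g s := by
  unfold g
  exact mul_nonneg (Real.exp_pos _).le (cos_nn n s h1 h2)

lemma mid_part (n : ℕ) (hn : 1 ≤ n) :
    (1/2) * Real.exp ((4 * n - 1/2) ^ 2) ≤ ∫ s in (4*(n:ℝ)-1/2)..(4*(n:ℝ)+1/2), g s := by
  have h := integral_mono_on (a := 4*(n:ℝ)-1/2) (b := 4*(n:ℝ)+1/2)
      (f := fun _ => (1/2) * Real.exp ((4 * (n:ℝ) - 1/2) ^ 2)) (g := g)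
      (by linarith) (intervalIntegrable_const) (g_intble _ _) ?_
  · rw [integral_const] at h
    have : ((4*(n:ℝ)+1/2) - (4*(n:ℝ)-1/2)) = 1 := by ring
    rw [this, one_smul] at h
    exact h
  · intro s hs
    obtain ⟨hs1, hs2⟩ := hs
    have hc : 1/2 ≤ Real.cos ((π / 2) * s) := cos_half n s hs1 hs2
    have hn1 : (1:ℝ) ≤ (n:ℝ) := by exact_mod_cast hn
    have hn0 : (0:ℝ) ≤ 4 * (n:ℝ) - 1/2 := by linarith
    have he : Real.exp ((4 * (n:ℝ) - 1/2) ^ 2) ≤ Real.exp (s ^ 2) := by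
      apply Real.exp_le_exp.mpr; nlinarith
    have := Real.exp_pos (s^2)
    unfold g
    nlinarith [Real.exp_pos ((4 * (n:ℝ) - 1/2) ^ 2)]

set_option maxHeartbeats 1000000 in
theorem nussbaum_limsup_top :
    ∀ M K : ℝ, ∃ k : ℝ, K < k ∧ 0 < k ∧
      M < (1 / k) * ∫ s in (0:ℝ)..k, (Real.exp (s ^ 2) * Real.cos ((π / 2) * s) + 1) := by
  intro M K
  obtain ⟨n, hn⟩ := exists_nat_gt (max (max K 2) (2 * |M| + 2))
  set N : ℝ := (n : ℝ) with hNdef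
  set a : ℝ := 4 * N - 1 with hadef
  set b : ℝ := 4 * N - 1/2 with hbdef
  set c : ℝ := 4 * N + 1/2 with hcdef
  set d : ℝ := 4 * N + 1 with hddef
  clear_value N a b c d
  have hK : K < N := lt_of_le_of_lt (le_trans (le_max_left _ _) (le_max_left _ _)) hn
  have h2N : 2 < N := lt_of_le_of_lt (le_trans (le_max_right _ _) (le_max_left _ _)) hn
  have hMN : 2 * |M| + 2 < N := lt_of_le_of_lt (le_max_right _ _) hn
  have hn1 : 1 ≤ n := by
    have h : (1:ℝ) ≤ (n:ℝ) := by rw [← hNdef]; linarith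
    exact_mod_cast h
  have hd : (0:ℝ) < d := by rw [hddef]; linarith
  have ha3 : (3:ℝ) ≤ a := by rw [hadef]; linarith
  refine ⟨d, by rw [hddef]; linarith, hd, ?_⟩
  -- rewrite integrand via g
  have hgeq : (∫ s in (0:ℝ)..d, (Real.exp (s ^ 2) * Real.cos ((π / 2) * s) + 1))
      = (∫ s in (0:ℝ)..d, (g s + 1)) := rfl
  have hfd : (∫ s in (0:ℝ)..d, (g s + 1)) = (∫ s in (0:ℝ)..d, g s) + d := by
    rw [integral_add (g_intble 0 d) intervalIntegrable_const]
    simp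
  -- split the integral
  have e1 := integral_add_adjacent_intervals (g_intble 0 a) (g_intble a b)
  have e2 := integral_add_adjacent_intervals (g_intble 0 b) (g_intble b c)
  have e3 := integral_add_adjacent_intervals (g_intble 0 c) (g_intble c d)
  -- bounds on pieces
  have h1 : -(Real.exp (a ^ 2) / a) ≤ ∫ s in (0:ℝ)..a, g s := neg_part a (by linarith)
  have h2' : 0 ≤ ∫ s in a..b, g s := by
    apply integral_nonneg (by rw [hadef, hbdef]; linarith)
    intro u hu
    refine g_nonneg_on n u ?_ ?_
    · have := hu.1; rw [hadef, hNdef] at this; linarith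
    · have := hu.2; rw [hbdef, hNdef] at this; linarith
  have h3 : (1/2) * Real.exp (b ^ 2) ≤ ∫ s in b..c, g s := by
    rw [hbdef, hcdef, hNdef]
    exact mid_part n hn1
  have h4 : 0 ≤ ∫ s in c..d, g s := by
    apply integral_nonneg (by rw [hcdef, hddef]; linarith)
    intro u hu
    refine g_nonneg_on n u ?_ ?_
    · have := hu.1; rw [hcdef, hNdef] at this; linarith
    · have := hu.2; rw [hddef, hNdef] at this; linarith
  -- exponential estimates
  have hexp1 : b ^ 2 + 1 ≤ Real.exp (b ^ 2) := by
    have := Real.add_one_le_exp (b ^ 2); linarith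
  have hexp2 : 4 * Real.exp (a ^ 2) ≤ 3 * Real.exp (b ^ 2) := by
    have hsum : b ^ 2 = a ^ 2 + (4 * N - 3/4) := by rw [hadef, hbdef]; ring
    rw [hsum, Real.exp_add]
    have h5 : (4 * N - 3/4) + 1 ≤ Real.exp (4 * N - 3/4) := Real.add_one_le_exp _
    have h6 := Real.exp_pos (a ^ 2)
    nlinarith
  have hdiva : Real.exp (a ^ 2) / a ≤ Real.exp (a ^ 2) / 3 := by
    rw [div_le_div_iff₀ (by linarith) (by norm_num)]
    nlinarith [Real.exp_pos (a ^ 2)]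
  -- assemble
  rw [hgeq, hfd, one_div_mul_eq_div, lt_div_iff₀ hd]
  have hsplit : (∫ s in (0:ℝ)..d, g s)
      = (∫ s in (0:ℝ)..a, g s) + (∫ s in a..b, g s) + (∫ s in b..c, g s)
        + (∫ s in c..d, g s) := by linarith
  rw [hsplit]
  have habs : M ≤ |M| := le_abs_self M
  have habs0 : 0 ≤ |M| := abs_nonneg M
  have hMd : M * d ≤ |M| * d := mul_le_mul_of_nonneg_right habs hd.le
  have hMd2 : |M| * d < ((N - 2)/2) * d := by
    apply mul_lt_mul_of_pos_right _ hd
    linarith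
  have hb2 : b ^ 2 = 16 * N ^ 2 - 4 * N + 1/4 := by rw [hbdef]; ring
  have key : M * d < (1/4) * Real.exp (b ^ 2) + d := by
    have harith : ((N - 2)/2) * d ≤ (1/4) * (b ^ 2 + 1) + d := by
      rw [hddef, hb2]
      nlinarith [sq_nonneg N]
    linarith
  linarith
end

section
/- Let N : ℝ → ℝ be the Nussbaum function N(s) = exp(s²)·cos((π/2)s) + 1. Then liminf_{k→∞} (1/k) ∫₀^k N(s) ds = −∞, i.e., for every real M there exist arbitrarily large k > 0 with (1/k) ∫₀^k N(s) ds < M. -/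
open Real

set_option maxHeartbeats 1600000 in
theorem nussbaum_liminf_bot :
    ∀ M K : ℝ, ∃ k : ℝ, K < k ∧ 0 < k ∧
      (1 / k) * ∫ s in (0:ℝ)..k, (Real.exp (s ^ 2) * Real.cos ((π / 2) * s) + 1) < M := by
  intro M K
  obtain ⟨n, hn⟩ := exists_nat_gt (max K (48 + 32 * |M|))
  set f : ℝ → ℝ := fun s => Real.exp (s ^ 2) * Real.cos ((π / 2) * s) + 1 with hf_def
  have hc : Continuous f := by fun_prop
  have hi : ∀ u v : ℝ, IntervalIntegrable f MeasureTheory.volume u v :=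
    fun u v => hc.intervalIntegrable u v
  set a : ℝ := 4 * n + 1 with ha_def
  have hna : (n : ℝ) ≤ a := by
    have : (0:ℝ) ≤ n := Nat.cast_nonneg n
    simp only [ha_def]; linarith
  have haK : K < a := lt_of_le_of_lt (le_max_left _ _) (lt_of_lt_of_le hn hna)
  have haC : 48 + 32 * |M| < a := lt_of_le_of_lt (le_max_right _ _) (lt_of_lt_of_le hn hna)
  have habs : 0 ≤ |M| := abs_nonneg M
  have ha48 : 48 < a := by linarith
  set k : ℝ := a + 2 with hk_def
  have hk0 : 0 < k := by simp only [hk_def]; linarith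
  refine ⟨k, by simp only [hk_def]; linarith, hk0, ?_⟩
  -- pointwise cosine bounds
  have hcos0 : ∀ s ∈ Set.Icc a (a + 2), Real.cos (π / 2 * s) ≤ 0 := by
    intro s hs
    have harg : π / 2 * s = π / 2 * (s - 4 * n) + n * (2 * π) := by push_cast; ring
    rw [harg, Real.cos_add_nat_mul_two_pi]
    have ht1 : (1:ℝ) ≤ s - 4 * n := by
      have := hs.1; simp only [ha_def] at this; linarith
    have ht3 : s - 4 * n ≤ 3 := by
      have := hs.2; simp only [ha_def] at this; linarith
    apply Real.cos_nonpos_of_pi_div_two_le_of_le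
    · nlinarith [pi_pos]
    · nlinarith [pi_pos]
  have hcos2 : ∀ s ∈ Set.Icc (a + 1/2) (a + 3/2), Real.cos (π / 2 * s) ≤ -(1/2) := by
    intro s hs
    have harg : π / 2 * s = π / 2 * (s - 4 * n) + n * (2 * π) := by push_cast; ring
    rw [harg, Real.cos_add_nat_mul_two_pi]
    set t : ℝ := s - 4 * n with ht_def
    have ht1 : (3/2:ℝ) ≤ t := by
      have := hs.1; simp only [ha_def] at this; simp only [ht_def]; linarith
    have ht3 : t ≤ 5/2 := by
      have := hs.2; simp only [ha_def] at this; simp only [ht_def]; linarith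
    have hid : Real.cos (π / 2 * t) = -Real.cos (π / 2 * t - π) := by
      rw [Real.cos_sub_pi]; ring
    rw [hid]
    have hy : |π / 2 * t - π| ≤ π / 4 := by
      rw [abs_le]; constructor <;> nlinarith [pi_pos]
    have h1 : Real.cos (π / 4) ≤ Real.cos |π / 2 * t - π| := by
      apply Real.cos_le_cos_of_nonneg_of_le_pi (abs_nonneg _) _ hy
      linarith [pi_pos]
    rw [Real.cos_abs, Real.cos_pi_div_four] at h1
    have hsq : (1:ℝ) ≤ Real.sqrt 2 := by
      rw [show (1:ℝ) = Real.sqrt 1 by simp]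
      exact Real.sqrt_le_sqrt (by norm_num)
    linarith
  -- split the integral
  have e1 : (∫ s in (0:ℝ)..k, f s) =
      (∫ s in (0:ℝ)..a, f s) + ((∫ s in a..(a + 1/2), f s) +
        ((∫ s in (a + 1/2)..(a + 3/2), f s) + (∫ s in (a + 3/2)..k, f s))) := by
    rw [intervalIntegral.integral_add_adjacent_intervals (hi (a+1/2) (a+3/2)) (hi (a+3/2) k)]
    rw [intervalIntegral.integral_add_adjacent_intervals (hi a (a+1/2)) (hi (a+1/2) k)]
    rw [intervalIntegral.integral_add_adjacent_intervals (hi 0 a) (hi a k)]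
  set E : ℝ := Real.exp (a ^ 2) with hE_def
  have hE1 : (1:ℝ) ≤ E := Real.one_le_exp (by positivity)
  set X : ℝ := Real.exp ((a + 1/2) ^ 2) with hX_def
  -- bound each piece
  have b1 : (∫ s in (0:ℝ)..a, f s) ≤ a * (E + 1) := by
    have := intervalIntegral.integral_mono_on (μ := MeasureTheory.volume)
      (by linarith : (0:ℝ) ≤ a) (hi 0 a)
      (intervalIntegrable_const (c := E + 1)) (fun s hs => ?_)
    · rw [intervalIntegral.integral_const, smul_eq_mul] at this
      nlinarith [this]
    · have h1 : Real.exp (s ^ 2) ≤ E := by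
        apply Real.exp_le_exp.mpr
        nlinarith [hs.1, hs.2]
      have h2 : Real.cos (π / 2 * s) ≤ 1 := Real.cos_le_one _
      have h3 : Real.exp (s ^ 2) * Real.cos (π / 2 * s) ≤ Real.exp (s ^ 2) :=
        mul_le_of_le_one_right (Real.exp_pos _).le h2
      simp only [hf_def]; linarith
  have b2 : (∫ s in a..(a + 1/2), f s) ≤ (1/2) * 1 := by
    have := intervalIntegral.integral_mono_on (μ := MeasureTheory.volume)
      (by linarith : a ≤ a + 1/2) (hi a (a + 1/2))
      (intervalIntegrable_const (c := (1:ℝ))) (fun s hs => ?_)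
    · rw [intervalIntegral.integral_const, smul_eq_mul] at this
      nlinarith [this]
    · have h1 : Real.cos (π / 2 * s) ≤ 0 := hcos0 s ⟨hs.1, by linarith [hs.2]⟩
      have h3 : Real.exp (s ^ 2) * Real.cos (π / 2 * s) ≤ 0 :=
        mul_nonpos_of_nonneg_of_nonpos (Real.exp_pos _).le h1
      simp only [hf_def]; linarith
  have b4 : (∫ s in (a + 3/2)..k, f s) ≤ (1/2) * 1 := by
    have := intervalIntegral.integral_mono_on (μ := MeasureTheory.volume)
      (by simp only [hk_def]; linarith : a + 3/2 ≤ k) (hi (a + 3/2) k)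
      (intervalIntegrable_const (c := (1:ℝ))) (fun s hs => ?_)
    · rw [intervalIntegral.integral_const, smul_eq_mul] at this
      simp only [hk_def] at this
      nlinarith [this]
    · have h1 : Real.cos (π / 2 * s) ≤ 0 := by
        refine hcos0 s ⟨by linarith [hs.1], ?_⟩
        have := hs.2; simp only [hk_def] at this; linarith
      have h3 : Real.exp (s ^ 2) * Real.cos (π / 2 * s) ≤ 0 :=
        mul_nonpos_of_nonneg_of_nonpos (Real.exp_pos _).le h1
      simp only [hf_def]; linarith
  have b3 : (∫ s in (a + 1/2)..(a + 3/2), f s) ≤ 1 * (-(1/2) * X + 1) := by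
    have := intervalIntegral.integral_mono_on (μ := MeasureTheory.volume)
      (by linarith : a + 1/2 ≤ a + 3/2) (hi (a + 1/2) (a + 3/2))
      (intervalIntegrable_const (c := -(1/2) * X + 1)) (fun s hs => ?_)
    · rw [intervalIntegral.integral_const, smul_eq_mul,
        show a + 3/2 - (a + 1/2) = (1:ℝ) by ring] at this
      exact this
    · have h1 : Real.cos (π / 2 * s) ≤ -(1/2) := hcos2 s hs
      have hXle : X ≤ Real.exp (s ^ 2) := by
        apply Real.exp_le_exp.mpr
        nlinarith [hs.1, hs.2, ha48]
      have h3 : Real.exp (s ^ 2) * Real.cos (π / 2 * s) ≤ -(1/2) * X := by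
        have h4 := mul_le_mul_of_nonneg_left h1 (Real.exp_pos (s ^ 2)).le
        nlinarith
      simp only [hf_def]; linarith
  -- lower bound on X
  have hexpa : 1 + a + a ^ 2 / 4 ≤ Real.exp a := by
    have h2 : 1 + a / 2 ≤ Real.exp (a / 2) := by
      have := Real.add_one_le_exp (a / 2); linarith
    have h3 : Real.exp a = Real.exp (a / 2) * Real.exp (a / 2) := by
      rw [← Real.exp_add]; norm_num
    nlinarith [h2, h3, ha48]
  have hXge : E * (1 + a + a ^ 2 / 4) ≤ X := by
    have h4 : X = E * Real.exp (a + 1/4) := by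
      rw [hX_def, hE_def, ← Real.exp_add]; ring_nf
    have h5 : Real.exp a ≤ Real.exp (a + 1/4) := Real.exp_le_exp.mpr (by linarith)
    rw [h4]
    have hE0 : (0:ℝ) ≤ E := by linarith
    exact mul_le_mul_of_nonneg_left (by linarith) hE0
  have hk2 : k = a + 2 := hk_def
  clear_value f a k E X
  subst hk2
  -- assemble
  have htotal : (∫ s in (0:ℝ)..(a + 2), f s) ≤ a * E + (a + 2) - (1/2) * X := by
    rw [e1]
    linarith [b1, b2, b3, b4]
  -- final arithmetic
  rw [one_div, inv_mul_eq_div, div_lt_iff₀ hk0]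
  have hkey : a * E + (a + 2) - (1/2) * (E * (1 + a + a ^ 2 / 4)) < M * (a + 2) := by
    have hp : 0 < a * (a - 48 - 32 * |M|) := by nlinarith
    have h6 : 0 ≤ (E - 1) * (a ^ 2 / 16 - a) := by
      apply mul_nonneg (by linarith)
      nlinarith
    have h7 : 0 ≤ (E - 1) * a := mul_nonneg (by linarith) (by linarith)
    have h8 : -|M| * (a + 2) ≤ M * (a + 2) :=
      mul_le_mul_of_nonneg_right (neg_abs_le M) (by linarith)
    nlinarith [h6, h7, h8, hp, hE1, habs, ha48]
  linarith
end

section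
/- Let N ≥ 1, let A = [a_{ij}] be a real N×N matrix with a_{ij} ≥ 0 and a_{ii} = 0, and let a_{10}, …, a_{N0} ≥ 0. Set D = diag(d₁,…,d_N) with d_i = ∑_{j=1}^N a_{ij}, L = D − A, B = diag(a_{10},…,a_{N0}), and H = L + B. Suppose that in the directed graph on nodes {0,1,…,N} with an edge from j to i (for i,j ∈ {1,…,N}) whenever a_{ij} > 0 and an edge from 0 to i whenever a_{i0} > 0, every node i ∈ {1,…,N} is reachable from node 0 by a directed path. Then H is invertible, the vector π = (Hᵀ)^{-1} 1_N has all entries strictly positive, and with Π = diag(π₁,…,π_N) the symmetric matrix Ξ = (ΠH + HᵀΠ)/2 is positive definite. -/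
/-! $H$ is a nonsingular M-matrix. Minimum principle: if $Hv ≥ 0$ and $v$ had a negative
minimum $m$, then at every $i$ with $v_i = m$ the row
$(Hv)_i = ∑_j a_{ij}(v_i - v_j) + a_{i0} v_i$ forces $a_{i0} = 0$ and $v_j = m$ whenever $a_{ij} > 0$; so the minimum set is closed under
predecessors and cannot be reached from the leader. Hence $Hv ≥ 0 ⇒ v ≥ 0$, which gives
injectivity of $H$, and $π_k = 1ᵀ H^{-1} e_k ≥ (H^{-1} e_k)_k > 0$. Positive definiteness comes
from the identity
$2 xᵀ Π H x = ∑_{i,j} π_i a_{ij} (x_i - x_j)^2 + ∑_i π_i a_{i0} x_i^2 + ∑_j (πᵀ H)_j x_j^2$,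
whose last sum is $|x|^2$ because $πᵀ H = 1ᵀ$. -/

open Matrix

section

variable {ι : Type*} [Fintype ι] [DecidableEq ι]

theorem dotProduct_half_smul_diagonal_mul_add_mulVec (H : Matrix ι ι ℝ) (π x : ι → ℝ) :
    x ⬝ᵥ (((1 : ℝ) / 2) • (diagonal π * H + Hᵀ * diagonal π)) *ᵥ x =
      ∑ i, π i * x i * (H *ᵥ x) i := by
  rw [smul_mulVec, dotProduct_smul, add_mulVec, dotProduct_add, ← mulVec_mulVec,
    ← mulVec_mulVec, dotProduct_mulVec x Hᵀ, vecMul_transpose]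
  simp only [dotProduct, mulVec_diagonal, smul_eq_mul, Finset.mul_sum, ← Finset.sum_add_distrib]
  exact Finset.sum_congr rfl fun i _ => by ring

theorem isHermitian_half_smul_diagonal_mul_add (H : Matrix ι ι ℝ) (π : ι → ℝ) :
    (((1 : ℝ) / 2) • (diagonal π * H + Hᵀ * diagonal π)).IsHermitian := by
  have hT : Hᵀ * diagonal π = (diagonal π * H)ᴴ := by
    rw [conjTranspose_eq_transpose_of_trivial, transpose_mul, diagonal_transpose]
  rw [hT]
  exact (isHermitian_add_transpose_self _).smul (IsSelfAdjoint.all _)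

end

namespace LeaderFollower

variable {ι : Type*} [Fintype ι] [DecidableEq ι] (A : Matrix ι ι ℝ) (a0 : ι → ℝ)

def matrix : Matrix ι ι ℝ := diagonal (fun i => ∑ j, A i j) - A + diagonal a0

def Adj : Option ι → Option ι → Prop
  | some j, some i => 0 < A i j
  | none, some i => 0 < a0 i
  | _, none => False

variable {A a0}

theorem matrix_mulVec_apply (v : ι → ℝ) (i : ι) :
    (matrix A a0 *ᵥ v) i = ∑ j, A i j * (v i - v j) + a0 i * v i := by
  rw [matrix, add_mulVec, sub_mulVec]
  simp only [Pi.add_apply, Pi.sub_apply, mulVec_diagonal]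
  simp only [mulVec, dotProduct, mul_sub, Finset.sum_sub_distrib, Finset.sum_mul]

theorem matrix_vecMul_apply (π : ι → ℝ) (j : ι) :
    (π ᵥ* matrix A a0) j = π j * (∑ k, A j k + a0 j) - ∑ i, π i * A i j := by
  rw [matrix, vecMul_add, vecMul_sub]
  simp only [Pi.add_apply, Pi.sub_apply, vecMul_diagonal]
  simp only [vecMul, dotProduct]
  ring

theorem sum_mul_mul_matrix_mulVec (π x : ι → ℝ) :
    ∑ i, π i * x i * (matrix A a0 *ᵥ x) i =
      (∑ i, ∑ j, π i * A i j * (x i - x j) ^ 2 + ∑ i, π i * a0 i * x i ^ 2 +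
        ∑ j, (π ᵥ* matrix A a0) j * x j ^ 2) / 2 := by
  have hvecMul : ∑ j, (π ᵥ* matrix A a0) j * x j ^ 2 =
      ∑ i, ∑ j, π i * A i j * (x i ^ 2 - x j ^ 2) + ∑ i, π i * a0 i * x i ^ 2 := by
    simp only [matrix_vecMul_apply, mul_add, Finset.mul_sum, add_mul, sub_mul, Finset.sum_mul,
      Finset.sum_add_distrib, Finset.sum_sub_distrib, mul_sub]
    rw [Finset.sum_comm (f := fun i j => π i * A i j * x j ^ 2)]
    ring
  have hpoint : ∀ i, π i * x i * (matrix A a0 *ᵥ x) i =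
      (∑ j, π i * A i j * ((x i - x j) ^ 2 + (x i ^ 2 - x j ^ 2)) +
        2 * (π i * a0 i * x i ^ 2)) / 2 := by
    intro i
    rw [matrix_mulVec_apply, mul_add, Finset.mul_sum, add_div, Finset.sum_div]
    congr 1
    · exact Finset.sum_congr rfl fun j _ => by ring
    · ring
  rw [hvecMul, Finset.sum_congr rfl fun i _ => hpoint i, ← Finset.sum_div]
  simp only [mul_add, Finset.sum_add_distrib, ← Finset.mul_sum]
  ring

theorem exists_adj_eq_of_isMin (hA : ∀ i j, 0 ≤ A i j) (ha0 : ∀ i, 0 ≤ a0 i)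
    {v : ι → ℝ} {m : ℝ} (hm : ∀ j, m ≤ v j) (hm0 : m < 0) {i : ι}
    (hvi : v i = m) (hLv : 0 ≤ (matrix A a0 *ᵥ v) i) {u : Option ι}
    (hu : Adj A a0 u (some i)) :
    ∃ j, u = some j ∧ v j = m := by
  have hterm : ∀ j ∈ Finset.univ, A i j * (m - v j) ≤ 0 := fun j _ =>
    mul_nonpos_of_nonneg_of_nonpos (hA i j) (sub_nonpos.2 (hm j))
  have ha0m : a0 i * m ≤ 0 := mul_nonpos_of_nonneg_of_nonpos (ha0 i) hm0.le
  rw [matrix_mulVec_apply, hvi] at hLv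
  have hsum : ∑ j, A i j * (m - v j) = 0 :=
    le_antisymm (Finset.sum_nonpos hterm) (by linarith)
  cases u with
  | none => linarith [mul_neg_of_pos_of_neg (show 0 < a0 i from hu) hm0]
  | some j =>
    refine ⟨j, rfl, ?_⟩
    have := (Finset.sum_eq_zero_iff_of_nonpos hterm).1 hsum j (Finset.mem_univ j)
    linarith [(mul_eq_zero.1 this).resolve_left (show 0 < A i j from hu).ne']

theorem nonneg_of_mulVec_nonneg (hA : ∀ i j, 0 ≤ A i j) (ha0 : ∀ i, 0 ≤ a0 i)
    (hreach : ∀ i, Relation.ReflTransGen (Adj A a0) none (some i))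
    {v : ι → ℝ} (hv : 0 ≤ matrix A a0 *ᵥ v) : 0 ≤ v := by
  intro i
  have : Nonempty ι := ⟨i⟩
  obtain ⟨k, hk⟩ := Finite.exists_min v
  by_contra! hi
  have hneg : v k < 0 := (hk i).trans_lt hi
  have hunreach :
      ∀ u, Relation.ReflTransGen (Adj A a0) none u → ∀ j, u = some j → v j ≠ v k := by
    intro u hu
    induction hu with
    | refl => simp
    | tail _ hadj ih =>
      rintro j rfl hj
      obtain ⟨l, rfl, hl⟩ := exists_adj_eq_of_isMin hA ha0 hk hneg hj (hv j) hadj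
      exact ih l rfl hl
  exact hunreach _ (hreach k) k rfl rfl

theorem isUnit_matrix (hA : ∀ i j, 0 ≤ A i j) (ha0 : ∀ i, 0 ≤ a0 i)
    (hreach : ∀ i, Relation.ReflTransGen (Adj A a0) none (some i)) :
    IsUnit (matrix A a0) := by
  have hle : ∀ v w, matrix A a0 *ᵥ v = matrix A a0 *ᵥ w → w ≤ v := fun v w h =>
    sub_nonneg.1 <| nonneg_of_mulVec_nonneg hA ha0 hreach (by rw [mulVec_sub, h, sub_self])
  exact mulVec_injective_iff_isUnit.1 fun v w h => le_antisymm (hle w v h.symm) (hle v w h)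

theorem pos_of_vecMul_eq_one (hA : ∀ i j, 0 ≤ A i j) (ha0 : ∀ i, 0 ≤ a0 i)
    (hreach : ∀ i, Relation.ReflTransGen (Adj A a0) none (some i))
    {π : ι → ℝ} (hπ : π ᵥ* matrix A a0 = fun _ => 1) (k : ι) : 0 < π k := by
  obtain ⟨x, hx⟩ :=
    mulVec_surjective_iff_isUnit.2 (isUnit_matrix hA ha0 hreach) (Pi.single k 1)
  have hx0 : ∀ j, 0 ≤ x j :=
    nonneg_of_mulVec_nonneg hA ha0 hreach (by rw [hx]; exact Pi.single_nonneg.2 zero_le_one)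
  have hxk : 0 < x k := by
    refine (hx0 k).lt_of_ne fun hxk => ?_
    have hrow := congrFun hx k
    rw [matrix_mulVec_apply, ← hxk, Pi.single_eq_same, mul_zero, add_zero] at hrow
    have : ∑ j, A k j * (0 - x j) ≤ 0 := Finset.sum_nonpos fun j _ =>
      mul_nonpos_of_nonneg_of_nonpos (hA k j) (by linarith [hx0 j])
    linarith
  calc 0 < x k := hxk
    _ ≤ ∑ j, x j := Finset.single_le_sum (fun j _ => hx0 j) (Finset.mem_univ k)
    _ = (π ᵥ* matrix A a0) ⬝ᵥ x := by simp [hπ, dotProduct]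
    _ = π k := by rw [← dotProduct_mulVec, hx, dotProduct_single, mul_one]

theorem posDef_half_smul (hA : ∀ i j, 0 ≤ A i j) (ha0 : ∀ i, 0 ≤ a0 i)
    {π : ι → ℝ} (hπ0 : ∀ i, 0 ≤ π i) (hπ : π ᵥ* matrix A a0 = fun _ => 1) :
    (((1 : ℝ) / 2) • (diagonal π * matrix A a0 + (matrix A a0)ᵀ * diagonal π)).PosDef := by
  refine .of_dotProduct_mulVec_pos (isHermitian_half_smul_diagonal_mul_add _ _) fun x hx => ?_
  rw [star_trivial, dotProduct_half_smul_diagonal_mul_add_mulVec, sum_mul_mul_matrix_mulVec, hπ]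
  have hedges : 0 ≤ ∑ i, ∑ j, π i * A i j * (x i - x j) ^ 2 :=
    Finset.sum_nonneg fun i _ => Finset.sum_nonneg fun j _ =>
      mul_nonneg (mul_nonneg (hπ0 i) (hA i j)) (sq_nonneg _)
  have hleader : 0 ≤ ∑ i, π i * a0 i * x i ^ 2 := Finset.sum_nonneg fun i _ =>
    mul_nonneg (mul_nonneg (hπ0 i) (ha0 i)) (sq_nonneg _)
  obtain ⟨k, hk⟩ := Function.ne_iff.1 hx
  have hnorm : 0 < ∑ j, 1 * x j ^ 2 := Finset.sum_pos' (fun j _ => by positivity)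
    ⟨k, Finset.mem_univ k, by simpa [sq_pos_iff] using hk⟩
  linarith

end LeaderFollower

theorem directed_spanning_tree_H_posdef_general
    (N : ℕ)
    (A : Matrix (Fin N) (Fin N) ℝ)
    (hA_nonneg : ∀ i j, 0 ≤ A i j)
    (a0 : Fin N → ℝ) (ha0 : ∀ i, 0 ≤ a0 i)
    (H : Matrix (Fin N) (Fin N) ℝ)
    (hH : H = (Matrix.diagonal fun i => ∑ j, A i j) - A + Matrix.diagonal a0)
    -- edge relation of the leader-follower digraph on nodes {0} ∪ {1,…,N},
    -- with `none` playing the role of the leader node 0: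
    (edge : Option (Fin N) → Option (Fin N) → Prop)
    (hedge : ∀ u v : Option (Fin N), edge u v ↔
      (∃ i j : Fin N, u = some j ∧ v = some i ∧ 0 < A i j) ∨
        (∃ i : Fin N, u = none ∧ v = some i ∧ 0 < a0 i))
    -- every follower is reachable from the leader by a directed path:
    (hreach : ∀ i : Fin N, Relation.ReflTransGen edge none (some i)) :
    IsUnit H ∧
      (∀ i : Fin N, 0 < (Hᵀ⁻¹ *ᵥ (fun _ => (1 : ℝ))) i) ∧
      (((1 : ℝ) / 2) •
          (Matrix.diagonal (Hᵀ⁻¹ *ᵥ (fun _ => (1 : ℝ))) * H +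
            Hᵀ * Matrix.diagonal (Hᵀ⁻¹ *ᵥ (fun _ => (1 : ℝ))))).PosDef := by
  obtain rfl : H = LeaderFollower.matrix A a0 := hH
  have hedge_le : edge ≤ LeaderFollower.Adj A a0 := fun u v h => by
    rcases (hedge u v).1 h with ⟨i, j, rfl, rfl, hAij⟩ | ⟨i, rfl, rfl, ha0i⟩
    exacts [hAij, ha0i]
  have hreach' i := Relation.ReflTransGen.mono hedge_le _ _ (hreach i)
  have hunit := LeaderFollower.isUnit_matrix hA_nonneg ha0 hreach'
  have hπ :
      ((LeaderFollower.matrix A a0)ᵀ⁻¹ *ᵥ fun _ => (1 : ℝ)) ᵥ*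
        LeaderFollower.matrix A a0 = fun _ => 1 := by
    rw [← mulVec_transpose, mulVec_mulVec,
      mul_nonsing_inv _ ((isUnit_iff_isUnit_det _).1 ((isUnit_transpose _).2 hunit)), one_mulVec]
  have hpos := LeaderFollower.pos_of_vecMul_eq_one hA_nonneg ha0 hreach' hπ
  exact ⟨hunit, hpos, LeaderFollower.posDef_half_smul hA_nonneg ha0 (fun i => (hpos i).le) hπ⟩

theorem directed_spanning_tree_H_posdef
    (N : ℕ) (hN : 1 ≤ N)
    (A : Matrix (Fin N) (Fin N) ℝ)
    (hA_nonneg : ∀ i j, 0 ≤ A i j)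
    (hA_diag : ∀ i, A i i = 0)
    (a0 : Fin N → ℝ) (ha0 : ∀ i, 0 ≤ a0 i)
    (H : Matrix (Fin N) (Fin N) ℝ)
    (hH : H = (Matrix.diagonal fun i => ∑ j, A i j) - A + Matrix.diagonal a0)
    -- edge relation of the leader-follower digraph on nodes {0} ∪ {1,…,N},
    -- with `none` playing the role of the leader node 0:
    (edge : Option (Fin N) → Option (Fin N) → Prop)
    (hedge : ∀ u v : Option (Fin N), edge u v ↔
      (∃ i j : Fin N, u = some j ∧ v = some i ∧ 0 < A i j) ∨
        (∃ i : Fin N, u = none ∧ v = some i ∧ 0 < a0 i))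
    -- every follower is reachable from the leader by a directed path:
    (hreach : ∀ i : Fin N, Relation.ReflTransGen edge none (some i)) :
    IsUnit H ∧
      (∀ i : Fin N, 0 < (Hᵀ⁻¹ *ᵥ (fun _ => (1 : ℝ))) i) ∧
      (((1 : ℝ) / 2) •
          (Matrix.diagonal (Hᵀ⁻¹ *ᵥ (fun _ => (1 : ℝ))) * H +
            Hᵀ * Matrix.diagonal (Hᵀ⁻¹ *ᵥ (fun _ => (1 : ℝ))))).PosDef :=
  directed_spanning_tree_H_posdef_general N A hA_nonneg a0 ha0 H hH edge hedge hreach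
end

section
/- Let ε₁, ε₂ > 0 and b₁, b₂ ∈ (0,1) be real constants, and let V : [0,∞) → ℝ be differentiable with V(t) ≥ 0 for all t ≥ 0, such that V'(t) ≤ −ε₁·V(t)^{b₁} whenever V(t) ≥ 1 and V'(t) ≤ −ε₂·V(t)^{b₂} whenever V(t) ≤ 1. Then there exists a finite time T ≥ 0 such that V(t) = 0 for all t ≥ T. -/
theorem two_regime_finite_time_convergence
    (ε₁ ε₂ b₁ b₂ : ℝ) (hε₁ : 0 < ε₁) (hε₂ : 0 < ε₂)
    (hb₁ : b₁ ∈ Set.Ioo (0 : ℝ) 1) (hb₂ : b₂ ∈ Set.Ioo (0 : ℝ) 1)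
    (V V' : ℝ → ℝ)
    (hVnonneg : ∀ t ≥ (0 : ℝ), 0 ≤ V t)
    (hVderiv : ∀ t ≥ (0 : ℝ), HasDerivAt V (V' t) t)
    (h₁ : ∀ t ≥ (0 : ℝ), 1 ≤ V t → V' t ≤ -ε₁ * (V t) ^ b₁)
    (h₂ : ∀ t ≥ (0 : ℝ), V t ≤ 1 → V' t ≤ -ε₂ * (V t) ^ b₂) :
    ∃ T : ℝ, 0 ≤ T ∧ ∀ t ≥ T, V t = 0 := by
  obtain ⟨hb₁0, hb₁1⟩ := hb₁
  obtain ⟨hb₂0, hb₂1⟩ := hb₂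
  have hV'nonpos : ∀ t ≥ (0:ℝ), V' t ≤ 0 := by
    intro t ht
    rcases le_total 1 (V t) with h | h
    · have h' := h₁ t ht h
      have := Real.rpow_nonneg (hVnonneg t ht) b₁
      nlinarith
    · have h' := h₂ t ht h
      have := Real.rpow_nonneg (hVnonneg t ht) b₂
      nlinarith
  have hVanti : AntitoneOn V (Set.Ici 0) := by
    apply antitoneOn_of_deriv_nonpos (convex_Ici 0)
    · exact fun t ht => (hVderiv t ht).continuousAt.continuousWithinAt
    · intro t ht
      rw [interior_Ici] at ht
      exact (hVderiv t ht.le).differentiableAt.differentiableWithinAt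
    · intro t ht
      rw [interior_Ici] at ht
      rw [(hVderiv t ht.le).deriv]
      exact hV'nonpos t ht.le
  obtain ⟨T₁, hT₁def⟩ : ∃ x : ℝ, x = V 0 / ε₁ := ⟨_, rfl⟩
  have hT₁0 : 0 ≤ T₁ := hT₁def ▸ div_nonneg (hVnonneg 0 le_rfl) hε₁.le
  have hVT₁ : V T₁ ≤ 1 := by
    by_contra hc
    push_neg at hc
    have hVge : ∀ t ∈ Set.Icc (0:ℝ) T₁, 1 ≤ V t := by
      intro t ⟨ht0, htT⟩
      have := hVanti (Set.mem_Ici.mpr ht0) (Set.mem_Ici.mpr hT₁0) htT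
      linarith
    have hanti : AntitoneOn (fun t => V t + ε₁ * t) (Set.Icc 0 T₁) := by
      apply antitoneOn_of_deriv_nonpos (convex_Icc 0 T₁)
      · intro t ht
        exact (((hVderiv t ht.1).add ((hasDerivAt_id t).const_mul ε₁)).continuousAt).continuousWithinAt
      · intro t ht
        rw [interior_Icc] at ht
        exact (((hVderiv t ht.1.le).add ((hasDerivAt_id t).const_mul ε₁)).differentiableAt).differentiableWithinAt
      · intro t ht
        rw [interior_Icc] at ht
        have hd : HasDerivAt (fun t => V t + ε₁ * t) (V' t + ε₁ * 1) t :=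
          (hVderiv t ht.1.le).add ((hasDerivAt_id t).const_mul ε₁)
        rw [hd.deriv]
        have h1V : 1 ≤ V t := hVge t ⟨ht.1.le, ht.2.le⟩
        have h' := h₁ t ht.1.le h1V
        have hpow : 1 ≤ (V t) ^ b₁ := Real.one_le_rpow h1V hb₁0.le
        nlinarith
    have := hanti (Set.left_mem_Icc.mpr hT₁0) (Set.right_mem_Icc.mpr hT₁0) hT₁0
    have hmul : ε₁ * T₁ = V 0 := by
      rw [hT₁def]
      field_simp
    simp only at this
    nlinarith
  obtain ⟨c, hcdef⟩ : ∃ x : ℝ, x = ε₂ * (1 - b₂) := ⟨_, rfl⟩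
  have hc0 : 0 < c := by rw [hcdef]; exact mul_pos hε₂ (by linarith)
  obtain ⟨T, hTdef⟩ : ∃ x : ℝ, x = T₁ + 1 / c := ⟨_, rfl⟩
  have hinv : 0 < 1 / c := one_div_pos.mpr hc0
  have hT₁T : T₁ ≤ T := by rw [hTdef]; linarith
  have hT0 : 0 ≤ T := le_trans hT₁0 hT₁T
  have hVT : V T = 0 := by
    rcases eq_or_lt_of_le (hVnonneg T hT0) with h | hpos
    · exact h.symm
    exfalso
    have hVposI : ∀ t ∈ Set.Icc T₁ T, 0 < V t := by
      intro t ⟨ht1, ht2⟩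
      have := hVanti (Set.mem_Ici.mpr (le_trans hT₁0 ht1)) (Set.mem_Ici.mpr hT0) ht2
      linarith
    have hVleI : ∀ t ∈ Set.Icc T₁ T, V t ≤ 1 := by
      intro t ⟨ht1, ht2⟩
      have := hVanti (Set.mem_Ici.mpr hT₁0) (Set.mem_Ici.mpr (le_trans hT₁0 ht1)) ht1
      linarith
    have hanti : AntitoneOn (fun t => (V t) ^ (1 - b₂) + c * t) (Set.Icc T₁ T) := by
      apply antitoneOn_of_deriv_nonpos (convex_Icc T₁ T)
      · intro t ht
        have ht0 : (0:ℝ) ≤ t := le_trans hT₁0 ht.1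
        have hd : HasDerivAt (fun t => (V t) ^ (1 - b₂) + c * t)
            (V' t * (1 - b₂) * (V t) ^ (1 - b₂ - 1) + c * 1) t :=
          ((hVderiv t ht0).rpow_const (Or.inl (hVposI t ht).ne')).add ((hasDerivAt_id t).const_mul c)
        exact hd.continuousAt.continuousWithinAt
      · intro t ht
        rw [interior_Icc] at ht
        have ht' : t ∈ Set.Icc T₁ T := ⟨ht.1.le, ht.2.le⟩
        have ht0 : (0:ℝ) ≤ t := le_trans hT₁0 ht.1.le
        have hd : HasDerivAt (fun t => (V t) ^ (1 - b₂) + c * t)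
            (V' t * (1 - b₂) * (V t) ^ (1 - b₂ - 1) + c * 1) t :=
          ((hVderiv t ht0).rpow_const (Or.inl (hVposI t ht').ne')).add ((hasDerivAt_id t).const_mul c)
        exact hd.differentiableAt.differentiableWithinAt
      · intro t ht
        rw [interior_Icc] at ht
        have ht' : t ∈ Set.Icc T₁ T := ⟨ht.1.le, ht.2.le⟩
        have ht0 : (0:ℝ) ≤ t := le_trans hT₁0 ht.1.le
        have hVpos := hVposI t ht'
        have hd : HasDerivAt (fun t => (V t) ^ (1 - b₂) + c * t)
            (V' t * (1 - b₂) * (V t) ^ (1 - b₂ - 1) + c * 1) t :=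
          ((hVderiv t ht0).rpow_const (Or.inl hVpos.ne')).add ((hasDerivAt_id t).const_mul c)
        rw [hd.deriv]
        have h' := h₂ t ht0 (hVleI t ht')
        have hprod : (V t) ^ b₂ * (V t) ^ (1 - b₂ - 1) = 1 := by
          rw [← Real.rpow_add hVpos]
          norm_num
        have hxpos : 0 < (V t) ^ (1 - b₂ - 1) := Real.rpow_pos_of_pos hVpos _
        have : V' t * (1 - b₂) * (V t) ^ (1 - b₂ - 1) ≤
            -ε₂ * (V t) ^ b₂ * (1 - b₂) * (V t) ^ (1 - b₂ - 1) := by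
          have h1b : 0 < 1 - b₂ := by linarith
          have := mul_le_mul_of_nonneg_right (mul_le_mul_of_nonneg_right h' h1b.le) hxpos.le
          linarith
        have heq : -ε₂ * (V t) ^ b₂ * (1 - b₂) * (V t) ^ (1 - b₂ - 1) = -c := by
          have : (V t) ^ b₂ * (V t) ^ (1 - b₂ - 1) = 1 := hprod
          rw [hcdef]; nlinarith [hprod]
        linarith [this, heq.le, heq.ge]
    have hmono := hanti (Set.left_mem_Icc.mpr hT₁T) (Set.right_mem_Icc.mpr hT₁T) hT₁T
    simp only at hmono
    have h1 : (V T₁) ^ (1 - b₂) ≤ 1 :=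
      Real.rpow_le_one (hVnonneg T₁ hT₁0) hVT₁ (by linarith)
    have h2 : 0 < (V T) ^ (1 - b₂) := Real.rpow_pos_of_pos hpos _
    have h3 : c * T = c * T₁ + 1 := by
      rw [hTdef]
      field_simp
    nlinarith
  refine ⟨T, hT0, fun t ht => ?_⟩
  have ht0 : (0:ℝ) ≤ t := le_trans hT0 ht
  have := hVanti (Set.mem_Ici.mpr hT0) (Set.mem_Ici.mpr ht0) ht
  have := hVnonneg t ht0
  linarith [hVT]
end
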